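/- The ratio Z(2n)/Z(n) is not bounded above: for every real number L > 0 there exists a positive integer n such that Z(2n) > L · Z(n). -/

import Mathlib

/-- The m-th triangular number. -/
def T (m : ℕ) : ℕ := m * (m + 1) / 2

/-- The pseudo-Smarandache function: the least positive m with n ∣ T m. -/
noncomputable def Z (n : ℕ) : ℕ := sInf {m : ℕ | 0 < m ∧ n ∣ T m}

/-!
Let `p` be an odd prime and `n = 2^(p-2) p`. By Fermat, `p ∣ 2^(p-1) - 1`, so
`n ∣ T (2^(p-1) - 1)` and `Z n < 2^(p-1)`. On the other hand `2n = 2^(p-1) p ∣ T m` forces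
`2^p ∣ m` or `2^p ∣ m + 1`, and `p ∣ m` or `p ∣ m + 1`; since `2^p ≡ 2 (mod p)`, in each of the
four cases `m ≥ 2^(p-1) (p - 1)`. Hence `Z (2n) / Z n > p - 1`, which is unbounded in `p`.
-/

lemma two_mul_T (m : ℕ) : 2 * T m = m * (m + 1) :=
  Nat.mul_div_cancel' (Nat.even_mul_succ_self m).two_dvd

lemma T_two_mul_sub_one (a : ℕ) : T (2 * a - 1) = a * (2 * a - 1) := by
  rcases a with _ | a
  · rfl
  rw [T, show 2 * (a + 1) - 1 = 2 * a + 1 by omega]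
  apply Nat.div_eq_of_eq_mul_left two_pos
  ring

lemma Z_le {n m : ℕ} (hm : 0 < m) (h : n ∣ T m) : Z n ≤ m :=
  Nat.sInf_le ⟨hm, h⟩

lemma Z_pos_and_dvd_T {n : ℕ} (hn : 0 < n) : 0 < Z n ∧ n ∣ T (Z n) :=
  Nat.sInf_mem (s := {m : ℕ | 0 < m ∧ n ∣ T m})
    ⟨2 * n - 1, by omega, by rw [T_two_mul_sub_one]; exact dvd_mul_right _ _⟩

lemma Z_two_pow_mul_lt {p k : ℕ} (hpk : (p : ℤ) ∣ 2 ^ (k + 1) - 1) :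
    Z (2 ^ k * p) < 2 ^ (k + 1) := by
  have hpk' : p ∣ 2 ^ (k + 1) - 1 := by
    rw [← Int.natCast_dvd_natCast]
    push_cast [Nat.one_le_two_pow]
    exact hpk
  have h2 : 1 < 2 ^ (k + 1) := Nat.one_lt_two_pow (Nat.succ_ne_zero k)
  have hle : Z (2 ^ k * p) ≤ 2 ^ (k + 1) - 1 := by
    apply Z_le (by omega)
    rw [pow_succ', T_two_mul_sub_one, ← pow_succ']
    exact mul_dvd_mul_left _ hpk'
  omega

/-- Since `2 ^ (k + 1) ≡ 2 (mod p)`, `p` divides `2 * s + e`. -/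
lemma two_pow_mul_sub_le {p s e : ℤ} {k : ℕ} (hpk : p ∣ 2 ^ k - 1) (hs : 0 < s) (he : -1 ≤ e)
    (h : p ∣ 2 ^ (k + 1) * s + e) : 2 ^ k * (p - e) ≤ 2 ^ (k + 1) * s := by
  have hdvd : p ∣ 2 * s + e := by
    rw [show 2 * s + e = 2 ^ (k + 1) * s + e - (2 ^ k - 1) * (2 * s) by ring]
    exact dvd_sub h (dvd_mul_of_dvd_left hpk _)
  have := Int.le_of_dvd (by omega) hdvd
  calc 2 ^ k * (p - e) ≤ 2 ^ k * (2 * s) := by gcongr; linarith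
    _ = 2 ^ (k + 1) * s := by ring

lemma two_pow_mul_pred_le {p m : ℤ} {k : ℕ} (hp : Prime p) (hpk : p ∣ 2 ^ k - 1) (hm : 0 < m)
    (h : 2 ^ (k + 1) * p ∣ m * (m + 1)) : 2 ^ k * (p - 1) ≤ m := by
  have h2 : 2 ^ (k + 1) ∣ m ∨ 2 ^ (k + 1) ∣ m + 1 := by
    have h2 := dvd_of_mul_right_dvd h
    rcases Int.even_or_odd m with hm2 | hm2
    · exact .inl (Int.prime_two.pow_dvd_of_dvd_mul_right _
        (Int.two_dvd_ne_zero.mpr (Int.odd_iff.mp hm2.add_one)) h2)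
    · exact .inr (Int.prime_two.pow_dvd_of_dvd_mul_left _
        (Int.two_dvd_ne_zero.mpr (Int.odd_iff.mp hm2)) h2)
  have hp' : p ∣ m ∨ p ∣ m + 1 := hp.dvd_or_dvd (dvd_of_mul_left_dvd h)
  have h2k : (0 : ℤ) < 2 ^ k := by positivity
  rcases h2 with ⟨s, rfl⟩ | ⟨s, hs⟩
  · have hs0 : 0 < s := pos_of_mul_pos_right hm (by positivity)
    rcases hp' with hpm | hpm
    · have := two_pow_mul_sub_le (e := 0) hpk hs0 (by norm_num) (by simpa using hpm)
      linarith
    · exact two_pow_mul_sub_le (e := 1) hpk hs0 (by norm_num) hpm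
  · have hs0 : 0 < s := pos_of_mul_pos_right (by rw [← hs]; omega) (by positivity)
    rcases hp' with hpm | hpm
    · have := two_pow_mul_sub_le (e := -1) hpk hs0 le_rfl (by convert hpm using 1; linarith)
      linarith
    · have := two_pow_mul_sub_le (e := 0) hpk hs0 (by norm_num) (by simpa [hs] using hpm)
      linarith

lemma two_pow_mul_pred_le_Z {p k : ℕ} (hp : p.Prime) (hpk : (p : ℤ) ∣ 2 ^ k - 1) :
    2 ^ k * ((p : ℤ) - 1) ≤ Z (2 ^ k * p) := by
  obtain ⟨hpos, hdvd⟩ := Z_pos_and_dvd_T (Nat.mul_pos (pow_pos two_pos k) hp.pos)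
  apply two_pow_mul_pred_le (Nat.prime_iff_prime_int.mp hp) hpk (by exact_mod_cast hpos)
  have := mul_dvd_mul_left 2 hdvd
  rw [two_mul_T, ← mul_assoc, ← pow_succ'] at this
  exact_mod_cast this

theorem stmt_12 (L : ℝ) (hL : 0 < L) :
    ∃ n : ℕ, 0 < n ∧ (Z (2 * n) : ℝ) > L * (Z n : ℝ) := by
  obtain ⟨p, hLp, hp⟩ := Nat.exists_infinite_primes (⌈L⌉₊ + 3)
  set k := p - 2
  have hfermat : (p : ℤ) ∣ 2 ^ (k + 1) - 1 := by
    rw [show k + 1 = p - 1 by omega]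
    exact Int.prime_dvd_pow_sub_one hp
      (Nat.isCoprime_iff_coprime.mpr (Nat.coprime_two_left.mpr (hp.odd_of_ne_two (by omega))))
  refine ⟨2 ^ k * p, Nat.mul_pos (by positivity) hp.pos, ?_⟩
  have hup : (Z (2 ^ k * p) : ℝ) < 2 ^ (k + 1) := by exact_mod_cast Z_two_pow_mul_lt hfermat
  have hlow : (2 : ℝ) ^ (k + 1) * ((p : ℝ) - 1) ≤ Z (2 * (2 ^ k * p)) := by
    rw [← mul_assoc, ← pow_succ']
    exact_mod_cast two_pow_mul_pred_le_Z hp hfermat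
  have hLp' : L < (p : ℝ) - 1 := by
    have : (⌈L⌉₊ + 3 : ℝ) ≤ p := by exact_mod_cast hLp
    linarith [Nat.le_ceil L]
  calc L * (Z (2 ^ k * p) : ℝ) ≤ L * 2 ^ (k + 1) := by gcongr
    _ < ((p : ℝ) - 1) * 2 ^ (k + 1) := by gcongr
    _ ≤ Z (2 * (2 ^ k * p)) := by linarith
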